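/- arXiv:2506.20552 — 2 statements merged into one kernel-verified Lean document; each statement's English description precedes it below -/
import Mathlib

section
/- Let λ be a Salem number, k ⊆ ℚ(λ+λ^{-1}) a subfield, f ∈ k[x] the minimal polynomial of λ over k, and σ : k → ℝ a real embedding different from the inclusion k ↪ ℝ. Then σ(f(1)·f(-1)) > 0. -/
/-!
Under `σ ≠ id`, `σ f` is a monic real factor of the minimal polynomial of `λ` over `ℚ`, so its
real roots are among `λ`, `λ⁻¹` (the remaining conjugates lie on the unit circle, and `±1`, being
rational, could only be a root if that polynomial were `X - λ`). A root at `λ` or `λ⁻¹` is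
impossible: the embedding of `k(λ)` extending `σ` would then fix `λ + λ⁻¹`, hence fix
`k ⊆ ℚ(λ + λ⁻¹)` pointwise. Thus `σ f` has no real root, so it is positive on all of `ℝ`.
-/

/-- A Salem number: a real algebraic integer `lam > 1` such that `lam⁻¹` is a Galois
conjugate of `lam` and all Galois conjugates other than `lam` and `lam⁻¹` have absolute
value `1`. -/
def IsSalem (lam : ℝ) : Prop :=
  1 < lam ∧ IsIntegral ℤ lam ∧
    Polynomial.aeval ((lam : ℂ)⁻¹) (minpoly ℚ lam) = 0 ∧
    ∀ z : ℂ, Polynomial.aeval z (minpoly ℚ lam) = 0 → z ≠ (lam : ℂ) → z ≠ (lam : ℂ)⁻¹ →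
      ‖z‖ = 1

open Polynomial

theorem Polynomial.Monic.eval_pos_of_forall_eval_ne_zero {g : ℝ[X]} (hg : g.Monic)
    (h : ∀ x, g.eval x ≠ 0) (x : ℝ) : 0 < g.eval x := by
  rcases Nat.eq_zero_or_pos g.natDegree with hdeg | hdeg
  · simp [hg.natDegree_eq_zero.mp hdeg]
  obtain ⟨y, hy⟩ := ((g.tendsto_atTop_of_leadingCoeff_nonneg (natDegree_pos_iff_degree_pos.mp hdeg)
    (by simp [hg.leadingCoeff])).eventually_gt_atTop 0).exists
  by_contra! hx
  obtain ⟨z, hz⟩ := intermediate_value_univ x y g.continuous ⟨hx, hy.le⟩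
  exact h z hz

theorem minpoly.eq_of_aeval_algebraMap_eq_zero {F L : Type*} [Field F] [Field L] [Algebra F L]
    {α : L} (hα : IsIntegral F α) {c : F}
    (hc : Polynomial.aeval (algebraMap F L c) (minpoly F α) = 0) :
    α = algebraMap F L c := by
  have hmin : minpoly F α = X - C c :=
    (eq_of_irreducible_of_monic (irreducible hα) hc (monic hα)).trans (eq_X_sub_C L c)
  simpa [hmin, sub_eq_zero] using minpoly.aeval F α

theorem aeval_minpoly_eq_zero_of_eval₂_minpoly_eq_zero {F k K L : Type*} [Field F] [Field k]
    [Ring K] [CommRing L] [Algebra F k] [Algebra k K] [Algebra F K] [IsScalarTower F k K]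
    [Algebra F L] (σ : k →ₐ[F] L) {α : K} {x : L} (hx : (minpoly k α).eval₂ (σ : k →+* L) x = 0) :
    aeval x (minpoly F α) = 0 := by
  obtain ⟨q, hq⟩ := minpoly.dvd_map_of_isScalarTower F k α
  rw [aeval_def, ← σ.comp_algebraMap, ← eval₂_map, hq, eval₂_mul, hx, zero_mul]

theorem IntermediateField.eqOn_adjoin {F E L : Type*} [Field F] [Field E] [Semiring L]
    [Algebra F E] [Algebra F L]
    {φ ψ : E →ₐ[F] L} {S : Set E} (h : Set.EqOn φ ψ S) : Set.EqOn φ ψ (adjoin F S) :=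
  fun x hx => DFunLike.congr_fun
    (adjoin_algHom_ext F (φ₁ := φ.comp (adjoin F S).val) (φ₂ := ψ.comp (adjoin F S).val)
      fun _ hs => h hs) ⟨x, hx⟩

theorem IsSalem.eq_or_eq_inv_of_aeval_eq_zero {lam x : ℝ} (h : IsSalem lam)
    (hx : aeval x (minpoly ℚ lam) = 0) : x = lam ∨ x = lam⁻¹ := by
  by_contra! hne
  have hunit : |x| = 1 := by
    simpa using h.2.2.2 x ((aeval_algebraMap_apply ℂ x _).trans (by rw [hx, map_zero]))
      (by exact_mod_cast hne.1) (by exact_mod_cast hne.2)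
  obtain ⟨c, rfl⟩ : ∃ c : ℚ, algebraMap ℚ ℝ c = x := by
    rcases (abs_eq zero_le_one).mp hunit with rfl | rfl
    exacts [⟨1, map_one _⟩, ⟨-1, by simp⟩]
  exact hne.1 (minpoly.eq_of_aeval_algebraMap_eq_zero h.2.1.tower_top hx).symm

theorem IntermediateField.eq_val_of_eval₂_minpoly_eq_zero_of_add_inv_eq {F K : Type*} [Field F]
    [Field K] [Algebra F K] {k : IntermediateField F K} {α t : K} (hα : IsIntegral k α)
    (hk : k ≤ adjoin F {α + α⁻¹}) (σ : k →ₐ[F] K)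
    (ht : (minpoly k α).eval₂ (σ : k →+* K) t = 0) (hsum : t + t⁻¹ = α + α⁻¹) : σ = k.val := by
  set f := minpoly k α
  have : Fact (Irreducible f) := ⟨minpoly.irreducible hα⟩
  set φ := AdjoinRoot.liftAlgHom f k.val α (minpoly.aeval k α)
  set τ := AdjoinRoot.liftAlgHom f σ t ht
  set β := AdjoinRoot.root f + (AdjoinRoot.root f)⁻¹
  have hφβ : φ β = α + α⁻¹ := by
    rw [map_add, map_inv₀, show φ (AdjoinRoot.root f) = α from AdjoinRoot.liftAlgHom_root ..]
  have hτβ : τ β = α + α⁻¹ := by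
    rw [map_add, map_inv₀, show τ (AdjoinRoot.root f) = t from AdjoinRoot.liftAlgHom_root .., hsum]
  have hτφ : Set.EqOn τ φ (adjoin F {β}) :=
    eqOn_adjoin fun _ hb => by rw [Set.mem_singleton_iff.mp hb, hφβ, hτβ]
  ext c
  obtain ⟨e, he, hec⟩ : (c : K) ∈ (adjoin F {β}).map φ := by
    rw [adjoin_map, Set.image_singleton, hφβ]
    exact hk c.2
  have hφc : φ (AdjoinRoot.of f c) = c := AdjoinRoot.liftAlgHom_of _ _ _ _ c
  have hτc : τ (AdjoinRoot.of f c) = σ c := AdjoinRoot.liftAlgHom_of _ _ _ _ c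
  have hec' : e = AdjoinRoot.of f c := φ.toRingHom.injective (hec.trans hφc.symm)
  rw [← hτc, ← hec']
  exact (hτφ he).trans hec

/-- Let `lam` be a Salem number, `k ⊆ ℚ(lam + lam⁻¹)` a subfield, `f` the minimal polynomial
of `lam` over `k`, and `σ : k → ℝ` a real embedding different from the inclusion. Then
`σ(f(1)·f(-1)) > 0`. -/
theorem salem_minpoly_eval_pos_at_nonidentity_embedding (lam : ℝ) (h : IsSalem lam)
    (k : IntermediateField ℚ ℝ)
    (hk : k ≤ IntermediateField.adjoin ℚ ({lam + lam⁻¹} : Set ℝ))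
    (σ : k →+* ℝ) (hσ : σ ≠ algebraMap k ℝ) :
    0 < σ ((minpoly k lam).eval 1 * (minpoly k lam).eval (-1)) := by
  have hint : IsIntegral k lam := (h.2.1.tower_top (A := ℚ)).tower_top
  have hno_root : ∀ x : ℝ, ((minpoly k lam).map σ).eval x ≠ 0 := by
    intro x hx
    rw [eval_map] at hx
    have hσ_val : σ.toRatAlgHom = k.val := by
      rcases h.eq_or_eq_inv_of_aeval_eq_zero
          (aeval_minpoly_eq_zero_of_eval₂_minpoly_eq_zero σ.toRatAlgHom hx) with rfl | rfl
      · exact IntermediateField.eq_val_of_eval₂_minpoly_eq_zero_of_add_inv_eq hint hk _ hx rfl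
      · exact IntermediateField.eq_val_of_eval₂_minpoly_eq_zero_of_add_inv_eq hint hk _ hx
          (by rw [inv_inv, add_comm])
    exact hσ (RingHom.ext fun c => DFunLike.congr_fun hσ_val c)
  have hpos := ((minpoly.monic hint).map σ).eval_pos_of_forall_eval_ne_zero hno_root
  rw [map_mul, ← eval_map_apply, ← eval_map_apply, map_one, map_neg, map_one]
  exact mul_pos (hpos 1) (hpos (-1))
end

section
/- Let T be an isometry of a quadratic space (k^r, q) over a number field k (i.e., T ∈ O(q)_k) whose characteristic polynomial has coefficients in the ring of integers O_k. Then there exists a quadratic form q' over k that is k-equivalent to q and a matrix g ∈ GL(r,k) such that g^{-1}Tg lies in O(q')_{O_k}, the group of O_k-integral isometries of q'. -/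
/-!
Let `k[X]` act on `k^r` with `X` acting as `T`. Over the principal ideal domain `k[X]` this
torsion module is a direct sum of cyclic modules `k[X]/(q_i)` with `q_i` monic dividing the
characteristic polynomial of `T`, so by Gauss's lemma every `q_i` has integral coefficients.
In the power bases `1, X, …, X^(deg q_i - 1)` the map `T` therefore acts through companion
matrices, whose entries are `0`, `1` and coefficients of the `q_i`. If `g` is the change of
basis, `g⁻¹ T g` is integral, and it is an isometry of the equivalent form `gᵀ S g`.
-/

open Matrix Polynomial

universe u

namespace Polynomial

variable {R S : Type*} [CommRing R] [CommRing S] [Algebra R S]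

theorem mem_lifts_integralClosure_iff {p : S[X]} :
    p ∈ lifts (algebraMap (integralClosure R S) S) ↔ ∀ i, IsIntegral R (p.coeff i) := by
  rw [lifts_iff_coeff_lifts]
  exact forall_congr' fun i => ⟨fun ⟨x, hx⟩ => hx ▸ x.2, fun h => ⟨⟨_, h⟩, rfl⟩⟩

theorem isIntegral_coeff_of_monic_dvd [Nontrivial S] {p q : S[X]} (hp : p.Monic) (hq : q.Monic)
    (hqp : q ∣ p) (hint : ∀ i, IsIntegral R (p.coeff i)) (i : ℕ) :
    IsIntegral R (q.coeff i) := by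
  obtain ⟨p₀, rfl, -, hp₀⟩ :=
    lifts_and_degree_eq_and_monic (mem_lifts_integralClosure_iff.mpr hint) hp
  exact isIntegral_trans _ (isIntegral_coeff_of_dvd p₀ q hp₀ hq hqp i)

theorem isIntegral_coeff_modByMonic [Nontrivial S] {p q : S[X]} (hq : q.Monic)
    (hp : ∀ i, IsIntegral R (p.coeff i)) (hqint : ∀ i, IsIntegral R (q.coeff i)) (i : ℕ) :
    IsIntegral R ((p %ₘ q).coeff i) := by
  obtain ⟨p₀, rfl⟩ := (mem_lifts p).mp (mem_lifts_integralClosure_iff.mpr hp)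
  obtain ⟨q₀, rfl, -, hq₀⟩ :=
    lifts_and_degree_eq_and_monic (mem_lifts_integralClosure_iff.mpr hqint) hq
  rw [← map_modByMonic _ hq₀]
  exact mem_lifts_integralClosure_iff.mp ⟨_, rfl⟩ i

end Polynomial

namespace AdjoinRoot

variable {R S : Type*} [CommRing R] [CommRing S] [Algebra R S]

theorem isIntegral_powerBasisAux'_repr_root_mul [Nontrivial S] {q : S[X]} (hq : q.Monic)
    (hint : ∀ i, IsIntegral R (q.coeff i)) (m l : Fin q.natDegree) :
    IsIntegral R ((powerBasisAux' hq).repr (root q * powerBasisAux' hq m) l) := by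
  have hm : powerBasisAux' hq m = root q ^ (m : ℕ) := (powerBasis' hq).basis_eq_pow m
  rw [hm, ← pow_succ', ← mk_X, ← map_pow, powerBasisAux'_repr_apply_to_fun, modByMonicHom_mk]
  refine isIntegral_coeff_modByMonic hq (fun i => ?_) hint l
  rw [coeff_X_pow]
  split_ifs
  exacts [isIntegral_one, isIntegral_zero]

end AdjoinRoot

theorem LinearMap.charpoly_mem_annihilator_aeval {K V : Type*} [Field K] [AddCommGroup V]
    [Module K V] [FiniteDimensional K V] (f : V →ₗ[K] V) :
    f.charpoly ∈ Module.annihilator K[X] (Module.AEval' f) := by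
  rw [Module.mem_annihilator]
  intro m
  apply (Module.AEval'.of f).symm.injective
  rw [Module.AEval.of_symm_smul, f.aeval_self_charpoly]
  simp

theorem LinearMap.exists_linearEquiv_pi_adjoinRoot {K : Type u} {V : Type*} [Field K]
    [AddCommGroup V] [Module K V] [FiniteDimensional K V] (f : V →ₗ[K] V) :
    ∃ (ι : Type u) (_ : Fintype ι) (q : ι → K[X]) (e : V ≃ₗ[K] Π i, AdjoinRoot (q i)),
      (∀ i, (q i).Monic ∧ q i ∣ f.charpoly) ∧
        ∀ v i, e (f v) i = AdjoinRoot.root (q i) * e v i := by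
  classical
  obtain ⟨ι, _, p, hp, n, ⟨E⟩⟩ :=
    Module.equiv_directSum_of_isTorsion (Module.AEval.isTorsion_of_finiteDimensional K V f)
  set q : ι → K[X] := fun i => normalize (p i ^ n i)
  have hspan (i : ι) : (K[X] ∙ p i ^ n i) = Ideal.span {q i} :=
    Ideal.span_singleton_eq_span_singleton.mpr (associated_normalize _)
  let E' : Module.AEval' f ≃ₗ[K[X]] Π i, K[X] ⧸ Ideal.span {q i} :=
    E.trans ((DFinsupp.mapRange.linearEquiv fun i => Submodule.quotEquivOfEq _ _ (hspan i)).trans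
      (DirectSum.linearEquivFunOnFintype K[X] ι _))
  have hdvd (i : ι) : q i ∣ f.charpoly := by
    have h := f.charpoly_mem_annihilator_aeval
    rw [E'.annihilator_eq, Module.annihilator_pi, Submodule.mem_iInf] at h
    simpa only [Ideal.annihilator_quotient, Ideal.mem_span_singleton] using h i
  refine ⟨ι, inferInstance, q, (Module.AEval'.of f).trans (E'.restrictScalars K),
    fun i => ⟨monic_normalize (pow_ne_zero _ (hp i).ne_zero), hdvd i⟩, fun v i => ?_⟩
  show E' (Module.AEval'.of f (f v)) i = _
  rw [← Module.AEval'.X_smul_of, map_smul]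
  -- `X • y = mk X * y` in `K[X] ⧸ (q i)`, and `mk X` is `root (q i)`
  rfl

theorem LinearMap.exists_basis_isIntegral_toMatrix {R K V ι : Type*} [CommRing R] [Field K]
    [Algebra R K] [AddCommGroup V] [Module K V] [FiniteDimensional K V] [Fintype ι]
    [DecidableEq ι] (hι : Fintype.card ι = Module.finrank K V) (f : V →ₗ[K] V)
    (hint : ∀ i, IsIntegral R (f.charpoly.coeff i)) :
    ∃ b : Module.Basis ι K V, ∀ i j, IsIntegral R (LinearMap.toMatrix b b f i j) := by
  classical
  obtain ⟨κ, _, q, e, hq, he⟩ := f.exists_linearEquiv_pi_adjoinRoot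
  let B : Module.Basis (Σ k, Fin (q k).natDegree) K (Π k, AdjoinRoot (q k)) :=
    Pi.basis fun k => AdjoinRoot.powerBasisAux' (hq k).1
  let σ : (Σ k, Fin (q k).natDegree) ≃ ι :=
    Fintype.equivOfCardEq (by rw [hι, Module.finrank_eq_card_basis (B.map e.symm)])
  refine ⟨(B.map e.symm).reindex σ, fun i j => ?_⟩
  rw [LinearMap.toMatrix_apply, Module.Basis.repr_reindex_apply, Module.Basis.reindex_apply,
    Module.Basis.map_apply, Module.Basis.map_repr, LinearEquiv.trans_apply,
    LinearEquiv.symm_symm]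
  obtain ⟨k, m⟩ := σ.symm j
  obtain ⟨k', l⟩ := σ.symm i
  have hX : e (f (e.symm (B ⟨k, m⟩))) = Pi.single (M := fun k => AdjoinRoot (q k)) k
      (AdjoinRoot.root (q k) * AdjoinRoot.powerBasisAux' (hq k).1 m) := by
    ext k''
    rw [he, LinearEquiv.apply_symm_apply, Pi.basis_apply]
    by_cases h : k'' = k
    · subst h
      simp
    · simp [Pi.single_eq_of_ne h]
  rw [hX, Pi.basis_repr]
  by_cases hk : k' = k
  · subst hk
    rw [Pi.single_eq_same]
    exact AdjoinRoot.isIntegral_powerBasisAux'_repr_root_mul _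
      (Polynomial.isIntegral_coeff_of_monic_dvd f.charpoly_monic (hq k').1 (hq k').2 hint) m l
  · rw [Pi.single_eq_of_ne hk, map_zero, Finsupp.zero_apply]
    exact isIntegral_zero

theorem Matrix.exists_isIntegral_conj {R K n : Type*} [CommRing R] [Field K] [Algebra R K]
    [Fintype n] [DecidableEq n] (T : Matrix n n K)
    (hint : ∀ i, IsIntegral R (T.charpoly.coeff i)) :
    ∃ g : GL n K, ∀ i j,
      IsIntegral R (((↑g⁻¹ : Matrix n n K) * T * (g : Matrix n n K)) i j) := by
  obtain ⟨b, hb⟩ := (toLin' T).exists_basis_isIntegral_toMatrix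
    (Module.finrank_fintype_fun_eq_card K).symm (by rwa [Matrix.charpoly_toLin'])
  let e := Pi.basisFun K n
  refine ⟨⟨e.toMatrix b, b.toMatrix e, e.toMatrix_mul_toMatrix_flip b,
    b.toMatrix_mul_toMatrix_flip e⟩, ?_⟩
  have h := basis_toMatrix_mul_linearMap_toMatrix_mul_basis_toMatrix b e b e (toLin' T)
  rw [LinearMap.toMatrix_eq_toMatrix', LinearMap.toMatrix'_toLin'] at h
  simpa [h] using hb

theorem Matrix.conj_isometry_of_isometry {R n : Type*} [CommRing R] [Fintype n]
    [DecidableEq n] {S T : Matrix n n R} (hT : Tᵀ * S * T = S) (g : GL n R) :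
    ((↑g⁻¹ : Matrix n n R) * T * (g : Matrix n n R))ᵀ * ((g : Matrix n n R)ᵀ * S * g)
        * ((↑g⁻¹ : Matrix n n R) * T * (g : Matrix n n R)) =
      (g : Matrix n n R)ᵀ * S * g := by
  have hg : (g : Matrix n n R) * (↑g⁻¹ : Matrix n n R) = 1 := Units.mul_inv g
  have h₁ (M : Matrix n n R) : (g : Matrix n n R) * ((↑g⁻¹ : Matrix n n R) * M) = M := by
    rw [← Matrix.mul_assoc, hg, Matrix.one_mul]
  have h₂ (M : Matrix n n R) :
      (↑g⁻¹ : Matrix n n R)ᵀ * ((g : Matrix n n R)ᵀ * M) = M := by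
    rw [← Matrix.mul_assoc, ← transpose_mul, hg, transpose_one, Matrix.one_mul]
  conv_rhs => rw [← hT]
  simp only [transpose_mul, Matrix.mul_assoc, h₁, h₂]

theorem isometry_conjugate_into_integral_points_general {r : ℕ} (k : Type*) [Field k]
    (S : Matrix (Fin r) (Fin r) k)
    (T : Matrix (Fin r) (Fin r) k) (hT : Tᵀ * S * T = S)
    (hcoeff : ∀ i, IsIntegral ℤ (T.charpoly.coeff i)) :
    ∃ (g : GL (Fin r) k) (S' : Matrix (Fin r) (Fin r) k),
      S' = (g : Matrix (Fin r) (Fin r) k)ᵀ * S * (g : Matrix (Fin r) (Fin r) k) ∧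
      (((↑g⁻¹ : Matrix (Fin r) (Fin r) k) * T * (g : Matrix (Fin r) (Fin r) k))ᵀ * S'
          * ((↑g⁻¹ : Matrix (Fin r) (Fin r) k) * T * (g : Matrix (Fin r) (Fin r) k)) = S') ∧
      ∀ i j, IsIntegral ℤ
        (((↑g⁻¹ : Matrix (Fin r) (Fin r) k) * T * (g : Matrix (Fin r) (Fin r) k)) i j) := by
  obtain ⟨g, hg⟩ := T.exists_isIntegral_conj hcoeff
  exact ⟨g, _, rfl, Matrix.conj_isometry_of_isometry hT g, hg⟩

/-- Let `T` be an isometry of a quadratic space `(k^r, q)` over a number field `k` (given by an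
invertible symmetric matrix `S`), whose characteristic polynomial has coefficients in `𝓞 k`.
Then there are a `k`-equivalent form `S' = gᵀ S g` and `g ∈ GL(r,k)` such that `g⁻¹ T g` is an
isometry of `S'` with all entries in `𝓞 k`. -/
theorem isometry_conjugate_into_integral_points {r : ℕ} (k : Type*) [Field k] [NumberField k]
    (S : Matrix (Fin r) (Fin r) k) (hsymm : Sᵀ = S) (hS : IsUnit S)
    (T : Matrix (Fin r) (Fin r) k) (hT : Tᵀ * S * T = S)
    (hcoeff : ∀ i, IsIntegral ℤ (T.charpoly.coeff i)) :
    ∃ (g : GL (Fin r) k) (S' : Matrix (Fin r) (Fin r) k),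
      S' = (g : Matrix (Fin r) (Fin r) k)ᵀ * S * (g : Matrix (Fin r) (Fin r) k) ∧
      (((↑g⁻¹ : Matrix (Fin r) (Fin r) k) * T * (g : Matrix (Fin r) (Fin r) k))ᵀ * S'
          * ((↑g⁻¹ : Matrix (Fin r) (Fin r) k) * T * (g : Matrix (Fin r) (Fin r) k)) = S') ∧
      ∀ i j, IsIntegral ℤ
        (((↑g⁻¹ : Matrix (Fin r) (Fin r) k) * T * (g : Matrix (Fin r) (Fin r) k)) i j) :=
  isometry_conjugate_into_integral_points_general k S T hT hcoeff
end
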